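/- For the 3-VFCA rule f(x,y,z) = (x₁y₃ + y₁z₁ + y₁z₂, x₂y₃ + y₂z₁ + y₂z₂, x₃y₃ + y₁z₃ + y₂z₃): for all x, y, z in the simplex Δ, f(x,y,z) ∈ Δ, and the rule is complete number-conserving on periodic configurations of any period L. -/

import Mathlib

/-!
On the simplex the rule is in conservation form: `f(x, y, z) = y + J(x, y) - J(y, z)` with the
flux `J(a, b) = b₂ • (a - e₂)` between neighbouring cells. Summed over a period the flux terms
telescope away, which gives number conservation; membership in the simplex is a direct check.
-/

open Finset

def rule6914257071453 (x y z : Fin 3 → ℝ) : Fin 3 → ℝ :=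
  ![x 0 * y 2 + y 0 * z 0 + y 0 * z 1,
    x 1 * y 2 + y 1 * z 0 + y 1 * z 1,
    x 2 * y 2 + y 0 * z 2 + y 1 * z 2]

/-- A state `2` in the right cell swaps with a state `0` or `1` in the left cell, so the net
transfer from cell `a` to its right neighbour `b` is `b₂ • (a - e₂)`. -/
def flux (a b : Fin 3 → ℝ) : Fin 3 → ℝ := b 2 • (a - Pi.single 2 1)

theorem rule6914257071453_eq_add_flux_sub_flux (x y z : Fin 3 → ℝ)
    (hy : ∑ i, y i = 1) (hz : ∑ i, z i = 1) :
    rule6914257071453 x y z = y + flux x y - flux y z := by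
  rw [Fin.sum_univ_three] at hy hz
  funext k
  fin_cases k <;>
    simp only [rule6914257071453, Fin.isValue, Fin.zero_eta, Fin.mk_one, Fin.reduceFinMk,
        Matrix.cons_val_zero, Matrix.cons_val_one, Matrix.cons_val, flux, Pi.add_apply,
        Pi.sub_apply, Pi.smul_apply, smul_eq_mul, Pi.single_apply,
        Fin.reduceEq, ↓reduceIte]
  · linear_combination y 0 * hz
  · linear_combination y 1 * hz
  · linear_combination z 2 * hy

theorem rule6914257071453_mem_stdSimplex {x y z : Fin 3 → ℝ} (hx : x ∈ stdSimplex ℝ (Fin 3))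
    (hy : y ∈ stdSimplex ℝ (Fin 3)) (hz : z ∈ stdSimplex ℝ (Fin 3)) :
    rule6914257071453 x y z ∈ stdSimplex ℝ (Fin 3) := by
  obtain ⟨hx₀, hx₁⟩ := hx
  obtain ⟨hy₀, hy₁⟩ := hy
  obtain ⟨hz₀, hz₁⟩ := hz
  rw [Fin.sum_univ_three] at hx₁ hy₁ hz₁
  refine ⟨fun k => ?_, ?_⟩
  · fin_cases k <;>
      simp only [rule6914257071453, Fin.isValue, Fin.zero_eta, Fin.mk_one, Fin.reduceFinMk,
        Matrix.cons_val_zero, Matrix.cons_val_one, Matrix.cons_val] <;>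
      exact add_nonneg (add_nonneg (mul_nonneg (hx₀ _) (hy₀ _)) (mul_nonneg (hy₀ _) (hz₀ _)))
        (mul_nonneg (hy₀ _) (hz₀ _))
  · simp only [Fin.sum_univ_three, rule6914257071453, Fin.isValue, Matrix.cons_val_zero,
      Matrix.cons_val_one, Matrix.cons_val]
    linear_combination y 2 * hx₁ + (y 0 + y 1) * hz₁ + hy₁

theorem sum_range_sub_eq_zero_of_periodic {M : Type*} [AddCommGroup M] {L : ℕ} {g : ℤ → M}
    (hg : ∀ i, g (i + L) = g i) :
    ∑ i ∈ range L, (g i - g (i + 1)) = 0 := by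
  have hgL : g L = g 0 := by simpa using hg 0
  simpa [hgL] using sum_range_sub' (fun n : ℕ => g n) L

theorem sum_range_eq_of_conservation_form {M : Type*} [AddCommGroup M] {L : ℕ} {x : ℤ → M}
    (hper : ∀ i, x (i + L) = x i) (F : M → M → M → M) (J : M → M → M)
    (hF : ∀ i, F (x (i - 1)) (x i) (x (i + 1)) = x i + J (x (i - 1)) (x i) - J (x i) (x (i + 1))) :
    ∑ i ∈ range L, F (x ((i : ℤ) - 1)) (x i) (x ((i : ℤ) + 1)) = ∑ i ∈ range L, x i := by
  have htelescope := sum_range_sub_eq_zero_of_periodic (L := L)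
    (g := fun i => J (x (i - 1)) (x i))
    fun i => by simp only [show i + L - 1 = i - 1 + L by ring, hper]
  simp only [add_sub_cancel_right] at htelescope
  simp only [hF, add_sub_assoc, sum_add_distrib, htelescope, add_zero]

theorem stmt_19_general (L : ℕ)
    (Δ : Set (Fin 3 → ℝ))
    (hΔdef : Δ = {v : Fin 3 → ℝ | (∑ i, v i) = 1 ∧ ∀ i, 0 ≤ v i})
    (f : (Fin 3 → ℝ) → (Fin 3 → ℝ) → (Fin 3 → ℝ) → (Fin 3 → ℝ))
    (hf : ∀ x y z, f x y z =
      ![x 0 * y 2 + y 0 * z 0 + y 0 * z 1,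
        x 1 * y 2 + y 1 * z 0 + y 1 * z 1,
        x 2 * y 2 + y 0 * z 2 + y 1 * z 2])
    (x : ℤ → Fin 3 → ℝ) (hper : ∀ i, x (i + L) = x i)
    (hx : ∀ i, x i ∈ Δ) :
    (∀ u ∈ Δ, ∀ v ∈ Δ, ∀ w ∈ Δ, f u v w ∈ Δ) ∧
    (∀ k, ∑ i ∈ Finset.range L, f (x ((i : ℤ) - 1)) (x (i : ℤ)) (x ((i : ℤ) + 1)) k
      = ∑ i ∈ Finset.range L, x (i : ℤ) k) := by
  have hΔ : Δ = stdSimplex ℝ (Fin 3) := hΔdef.trans (Set.ext fun _ => and_comm)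
  obtain rfl : f = rule6914257071453 := funext₃ hf
  subst hΔ
  refine ⟨fun u hu v hv w hw => rule6914257071453_mem_stdSimplex hu hv hw, fun k => ?_⟩
  have hconserved := sum_range_eq_of_conservation_form hper rule6914257071453 flux
    fun i => rule6914257071453_eq_add_flux_sub_flux _ _ _ (hx i).2 (hx (i + 1)).2
  simpa only [Finset.sum_apply] using congrFun hconserved k

theorem stmt_19 (L : ℕ) (hL : 0 < L)
    (Δ : Set (Fin 3 → ℝ))
    (hΔdef : Δ = {v : Fin 3 → ℝ | (∑ i, v i) = 1 ∧ ∀ i, 0 ≤ v i})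
    (f : (Fin 3 → ℝ) → (Fin 3 → ℝ) → (Fin 3 → ℝ) → (Fin 3 → ℝ))
    (hf : ∀ x y z, f x y z =
      ![x 0 * y 2 + y 0 * z 0 + y 0 * z 1,
        x 1 * y 2 + y 1 * z 0 + y 1 * z 1,
        x 2 * y 2 + y 0 * z 2 + y 1 * z 2])
    (x : ℤ → Fin 3 → ℝ) (hper : ∀ i, x (i + L) = x i)
    (hx : ∀ i, x i ∈ Δ) :
    (∀ u ∈ Δ, ∀ v ∈ Δ, ∀ w ∈ Δ, f u v w ∈ Δ) ∧
    (∀ k, ∑ i ∈ Finset.range L, f (x ((i : ℤ) - 1)) (x (i : ℤ)) (x ((i : ℤ) + 1)) k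
      = ∑ i ∈ Finset.range L, x (i : ℤ) k) :=
  stmt_19_general L Δ hΔdef f hf x hper hx
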